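/- If n = p_1^{α_1} ⋯ p_r^{α_r} is highly composite with p_r > 512 as its largest prime factor, and p_j is a prime factor of n with (p_r+1)/2 ≤ p_j ≤ p_r+1 and α_j ≥ 2, then the number n' = n · p_{r+1} p_{r+2} / (p_j p_{j-1} p_{j-2}) satisfies n' < n and d(n') ≥ d(n)·4·(2/3)^3 > d(n), contradicting highly-compositeness; hence no such p_j exists. -/
import Mathlib


/-- `d n`: number of positive divisors of `n`. -/
def d (n : ℕ) : ℕ := (Nat.divisors n).card

/-- A positive integer `n` is highly composite if every smaller positive
integer has strictly fewer divisors. -/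
def HighlyComposite (n : ℕ) : Prop :=
  0 < n ∧ ∀ m : ℕ, 0 < m → m < n → d m < d n

lemma d_prime_pow {p : ℕ} (hp : p.Prime) (k : ℕ) : d (p ^ k) = k + 1 := by
  unfold d
  rw [Nat.divisors_prime_pow hp, Finset.card_map, Finset.card_range]

lemma d_mul_of_not_dvd {p k m : ℕ} (hp : p.Prime) (hm : ¬ p ∣ m) :
    d (p ^ k * m) = (k + 1) * d m := by
  have hc : Nat.Coprime (p ^ k) m :=
    Nat.Coprime.pow_left _ ((Nat.Prime.coprime_iff_not_dvd hp).mpr hm)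
  unfold d
  rw [hc.card_divisors_mul, ← d_prime_pow hp k]
  rfl

lemma prime_not_dvd_mul {p m n : ℕ} (hp : p.Prime) (hm : ¬ p ∣ m) (hn : ¬ p ∣ n) :
    ¬ p ∣ m * n := fun h => ((Nat.Prime.dvd_mul hp).mp h).elim hm hn

lemma prime_not_dvd_pow {p s k : ℕ} (hp : p.Prime) (hs : s.Prime) (hne : p ≠ s) :
    ¬ p ∣ s ^ k := fun h =>
  hne ((Nat.prime_dvd_prime_iff_eq hp hs).mp (hp.dvd_of_dvd_pow h))

/-- Exchange lemma: in a highly composite number, exponents are nonincreasing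
in the prime. -/
lemma hc_exchange {n : ℕ} (hn : HighlyComposite n) {q q' : ℕ} (hq : q.Prime)
    (hq' : q'.Prime) (hlt : q < q') (hdvd : q' ∣ n) :
    n.factorization q' ≤ n.factorization q := by
  by_contra hcon
  push_neg at hcon
  have hn0 : n ≠ 0 := hn.1.ne'
  set β := n.factorization q with hβ
  set β' := n.factorization q' with hβ'
  set n1 := ordCompl[q] n with hn1
  set t := ordCompl[q'] n1 with ht
  have hn1ne : n1 ≠ 0 := (Nat.ordCompl_pos q hn0).ne'
  have htne : t ≠ 0 := (Nat.ordCompl_pos q' hn1ne).ne'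
  have hqn1 : ¬ q ∣ n1 := Nat.not_dvd_ordCompl hq hn0
  have hq't : ¬ q' ∣ t := Nat.not_dvd_ordCompl hq' hn1ne
  have htdvd : t ∣ n1 := Nat.ordCompl_dvd n1 q'
  have hqt : ¬ q ∣ t := fun h => hqn1 (h.trans htdvd)
  have hfn1 : n1.factorization q' = β' := by
    rw [hn1, Nat.factorization_ordCompl n q, Finsupp.erase_ne (Ne.symm hlt.ne)]
  have hneq : n = q ^ β * (q' ^ β' * t) := by
    rw [← hfn1]
    rw [ht, Nat.ordProj_mul_ordCompl_eq_self n1 q']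
    rw [hn1, hβ, Nat.ordProj_mul_ordCompl_eq_self n q]
  set m := q ^ β' * (q' ^ β * t) with hm
  have htpos : 0 < t := Nat.pos_of_ne_zero htne
  have hmpos : 0 < m := by
    rw [hm]
    have := hq.pos
    have := hq'.pos
    positivity
  have hmlt : m < n := by
    rw [hneq, hm]
    have hc : β' - β ≠ 0 := by omega
    have h1 : q ^ (β' - β) < q' ^ (β' - β) :=
      Nat.pow_lt_pow_left hlt hc
    have hsplit : ∀ x : ℕ, x ^ β' = x ^ β * x ^ (β' - β) := fun x => by
      rw [← pow_add]; congr 1; omega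
    have hpos : 0 < q ^ β * q' ^ β * t := by
      have := hq.pos; have := hq'.pos; positivity
    calc q ^ β' * (q' ^ β * t) = q ^ (β' - β) * (q ^ β * q' ^ β * t) := by
          rw [hsplit q]; ring
      _ < q' ^ (β' - β) * (q ^ β * q' ^ β * t) :=
          Nat.mul_lt_mul_of_lt_of_le h1 le_rfl hpos
      _ = q ^ β * (q' ^ β' * t) := by rw [hsplit q']; ring
  have hdm : d m = (β' + 1) * ((β + 1) * d t) := by
    rw [hm, d_mul_of_not_dvd hq (prime_not_dvd_mul hq (prime_not_dvd_pow hq hq' hlt.ne) hqt),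
      d_mul_of_not_dvd hq' hq't]
  have hdn : d n = (β + 1) * ((β' + 1) * d t) := by
    rw [hneq, d_mul_of_not_dvd hq (prime_not_dvd_mul hq (prime_not_dvd_pow hq hq' hlt.ne) hqt),
      d_mul_of_not_dvd hq' hq't]
  have hlt' := hn.2 m hmpos hmlt
  rw [hdm, hdn] at hlt'
  nlinarith [hlt']

set_option maxHeartbeats 1000000 in
/-- If n is highly composite with largest prime factor p_r > 512, then no
prime factor p of n with (p_r+1)/2 ≤ p ≤ p_r+1 has exponent ≥ 2. -/
theorem stmt_17 (n : ℕ) (hn : HighlyComposite n)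
    (pr : ℕ) (hpr : pr.Prime) (hprdvd : pr ∣ n)
    (hmax : ∀ q : ℕ, q.Prime → q ∣ n → q ≤ pr) (h512 : 512 < pr)
    (p : ℕ) (hp : p.Prime) (hpdvd : p ∣ n)
    (hlow : pr + 1 ≤ 2 * p) (hhigh : p ≤ pr + 1) :
    ¬ 2 ≤ n.factorization p := by
  intro h2
  have hn0 : n ≠ 0 := hn.1.ne'
  have hple : p ≤ pr := hmax p hp hpdvd
  have hp257 : 257 ≤ p := by omega
  -- p is odd
  have hpodd : p % 2 = 1 := Nat.odd_iff.mp (hp.odd_of_ne_two (by omega))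
  -- prime a just below p
  obtain ⟨a, ha, hagt, hale⟩ := Nat.exists_prime_lt_and_le_two_mul (p / 2) (by omega)
  have haltp : a < p := by omega
  have ha2 : p + 1 ≤ 2 * a := by omega
  have haodd : a % 2 = 1 := Nat.odd_iff.mp (ha.odd_of_ne_two (by omega))
  -- prime b just below a
  obtain ⟨b, hb, hbgt, hble⟩ := Nat.exists_prime_lt_and_le_two_mul (a / 2) (by omega)
  have hblta : b < a := by omega
  have hb2 : a + 1 ≤ 2 * b := by omega
  -- primes q1 < q2 above pr
  obtain ⟨q1, hq1, hq1gt, hq1le⟩ := Nat.exists_prime_lt_and_le_two_mul pr (by omega)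
  obtain ⟨q2, hq2, hq2gt, hq2le⟩ := Nat.exists_prime_lt_and_le_two_mul q1 (by omega)
  have hq1n : ¬ q1 ∣ n := fun h => by have := hmax q1 hq1 h; omega
  have hq2n : ¬ q2 ∣ n := fun h => by have := hmax q2 hq2 h; omega
  -- exponents
  set ep := n.factorization p with hep
  have hea : 2 ≤ n.factorization a := le_trans h2 (hc_exchange hn ha hp haltp hpdvd)
  have heb : 2 ≤ n.factorization b :=
    le_trans h2 (hc_exchange hn hb hp (lt_trans hblta haltp) hpdvd)
  set ea := n.factorization a with hea'
  set eb := n.factorization b with heb'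
  -- decompose n
  set n1 := ordCompl[p] n with hn1
  set n2 := ordCompl[a] n1 with hn2
  set t := ordCompl[b] n2 with ht
  have hn1ne : n1 ≠ 0 := (Nat.ordCompl_pos p hn0).ne'
  have hn2ne : n2 ≠ 0 := (Nat.ordCompl_pos a hn1ne).ne'
  have htne : t ≠ 0 := (Nat.ordCompl_pos b hn2ne).ne'
  have htdvdn : t ∣ n := ((Nat.ordCompl_dvd n2 b).trans (Nat.ordCompl_dvd n1 a)).trans
    (Nat.ordCompl_dvd n p)
  have hpt : ¬ p ∣ t := fun h =>
    Nat.not_dvd_ordCompl hp hn0 (h.trans ((Nat.ordCompl_dvd n2 b).trans (Nat.ordCompl_dvd n1 a)))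
  have hat : ¬ a ∣ t := fun h =>
    Nat.not_dvd_ordCompl ha hn1ne (h.trans (Nat.ordCompl_dvd n2 b))
  have hbt : ¬ b ∣ t := Nat.not_dvd_ordCompl hb hn2ne
  have hq1t : ¬ q1 ∣ t := fun h => hq1n (h.trans htdvdn)
  have hq2t : ¬ q2 ∣ t := fun h => hq2n (h.trans htdvdn)
  have hfa : n1.factorization a = ea := by
    rw [hn1, Nat.factorization_ordCompl n p, Finsupp.erase_ne haltp.ne]
  have hfb : n2.factorization b = eb := by
    rw [hn2, Nat.factorization_ordCompl n1 a, Finsupp.erase_ne hblta.ne,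
      hn1, Nat.factorization_ordCompl n p, Finsupp.erase_ne (by omega : b ≠ p)]
  have hneq : n = p ^ ep * (a ^ ea * (b ^ eb * t)) := by
    rw [← hfb, ht, Nat.ordProj_mul_ordCompl_eq_self n2 b,
      ← hfa, hn2, Nat.ordProj_mul_ordCompl_eq_self n1 a,
      hn1, hep, Nat.ordProj_mul_ordCompl_eq_self n p]
  -- the competitor m
  set m := p ^ (ep - 1) * (a ^ (ea - 1) * (b ^ (eb - 1) * (q1 ^ 1 * (q2 ^ 1 * t)))) with hm
  have htpos : 0 < t := Nat.pos_of_ne_zero htne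
  have hmpos : 0 < m := by
    rw [hm]
    have := hp.pos
    have := ha.pos
    have := hb.pos
    have := hq1.pos
    have := hq2.pos
    positivity
  -- key multiplicative identity
  have hkey : m * (p * (a * b)) = n * (q1 * q2) := by
    have e1 : p ^ (ep - 1) * p = p ^ ep := by
      rw [← pow_succ]; congr 1; omega
    have e2 : a ^ (ea - 1) * a = a ^ ea := by
      rw [← pow_succ]; congr 1; omega
    have e3 : b ^ (eb - 1) * b = b ^ eb := by
      rw [← pow_succ]; congr 1; omega
    calc m * (p * (a * b))
        = (p ^ (ep - 1) * p) * ((a ^ (ea - 1) * a) * ((b ^ (eb - 1) * b) *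
            (q1 ^ 1 * (q2 ^ 1 * t)))) := by rw [hm]; ring
      _ = p ^ ep * (a ^ ea * (b ^ eb * (q1 ^ 1 * (q2 ^ 1 * t)))) := by rw [e1, e2, e3]
      _ = n * (q1 * q2) := by rw [hneq]; ring
  -- size comparison : q1 * q2 < p * (a * b)
  have hq1q2 : q1 * q2 < p * (a * b) := by
    have f1 : q1 * q2 ≤ 8 * (pr * pr) := by
      calc q1 * q2 ≤ (2 * pr) * (4 * pr) := Nat.mul_le_mul hq1le (by omega)
        _ = 8 * (pr * pr) := by ring
    have f2 : pr * pr ≤ (2 * p) * (2 * p) := Nat.mul_le_mul (by omega) (by omega)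
    have f3 : p * p ≤ (2 * a) * (4 * b) := Nat.mul_le_mul (by omega) (by omega)
    have f4 : 257 * (p * p) ≤ p * (p * p) := Nat.mul_le_mul_right _ hp257
    have f5 : p * (p * p) ≤ p * ((2 * a) * (4 * b)) := Nat.mul_le_mul_left _ f3
    have f6 : p * ((2 * a) * (4 * b)) = 8 * (p * (a * b)) := by ring
    have f7 : (2 * p) * (2 * p) = 4 * (p * p) := by ring
    have hpp : 0 < p * p := by positivity
    linarith
  have hmlt : m < n := by
    have : m * (p * (a * b)) < n * (p * (a * b)) := by
      rw [hkey]
      exact Nat.mul_lt_mul_of_pos_left hq1q2 hn.1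
    exact Nat.lt_of_mul_lt_mul_right this
  -- divisor counts
  have hpa : p ≠ a := haltp.ne'
  have hpb : p ≠ b := by omega
  have hab : a ≠ b := hblta.ne'
  have hq12 : q1 ≠ q2 := hq2gt.ne
  have hdn : d n = (ep + 1) * ((ea + 1) * ((eb + 1) * d t)) := by
    rw [hneq,
      d_mul_of_not_dvd hp (prime_not_dvd_mul hp (prime_not_dvd_pow hp ha hpa)
        (prime_not_dvd_mul hp (prime_not_dvd_pow hp hb hpb) hpt)),
      d_mul_of_not_dvd ha (prime_not_dvd_mul ha (prime_not_dvd_pow ha hb hab) hat),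
      d_mul_of_not_dvd hb hbt]
  have hdm : d m = ep * (ea * (eb * (2 * (2 * d t)))) := by
    have hpq1 : p ≠ q1 := by omega
    have hpq2 : p ≠ q2 := by omega
    have haq1 : a ≠ q1 := by omega
    have haq2 : a ≠ q2 := by omega
    have hbq1 : b ≠ q1 := by omega
    have hbq2 : b ≠ q2 := by omega
    rw [hm,
      d_mul_of_not_dvd hp (prime_not_dvd_mul hp (prime_not_dvd_pow hp ha hpa)
        (prime_not_dvd_mul hp (prime_not_dvd_pow hp hb hpb)
          (prime_not_dvd_mul hp (prime_not_dvd_pow hp hq1 hpq1)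
            (prime_not_dvd_mul hp (prime_not_dvd_pow hp hq2 hpq2) hpt)))),
      d_mul_of_not_dvd ha (prime_not_dvd_mul ha (prime_not_dvd_pow ha hb hab)
        (prime_not_dvd_mul ha (prime_not_dvd_pow ha hq1 haq1)
          (prime_not_dvd_mul ha (prime_not_dvd_pow ha hq2 haq2) hat))),
      d_mul_of_not_dvd hb (prime_not_dvd_mul hb (prime_not_dvd_pow hb hq1 hbq1)
        (prime_not_dvd_mul hb (prime_not_dvd_pow hb hq2 hbq2) hbt)),
      d_mul_of_not_dvd hq1 (prime_not_dvd_mul hq1 (prime_not_dvd_pow hq1 hq2 hq12) hq1t),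
      d_mul_of_not_dvd hq2 hq2t]
    have e1 : ep - 1 + 1 = ep := by omega
    have e2 : ea - 1 + 1 = ea := by omega
    have e3 : eb - 1 + 1 = eb := by omega
    rw [e1, e2, e3]
  have hdt : 1 ≤ d t := by
    have : (1 : ℕ) ∈ t.divisors := Nat.one_mem_divisors.mpr htne
    exact Finset.card_pos.mpr ⟨1, this⟩
  have hdnm : d n < d m := by
    have hep2 : 2 ≤ ep := h2
    rw [hdn, hdm]
    have c1 : 2 * (ep + 1) ≤ 3 * ep := by omega
    have c2 : 2 * (ea + 1) ≤ 3 * ea := by omega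
    have c3 : 2 * (eb + 1) ≤ 3 * eb := by omega
    have big : (2 * (ep + 1)) * ((2 * (ea + 1)) * ((2 * (eb + 1)) * d t)) ≤
        (3 * ep) * ((3 * ea) * ((3 * eb) * d t)) :=
      Nat.mul_le_mul c1 (Nat.mul_le_mul c2 (Nat.mul_le_mul c3 le_rfl))
    have hXpos : 0 < ep * (ea * (eb * d t)) := by
      have : 0 < ep := by omega
      have : 0 < ea := by omega
      have : 0 < eb := by omega
      positivity
    have eL : (2 * (ep + 1)) * ((2 * (ea + 1)) * ((2 * (eb + 1)) * d t)) =
        8 * ((ep + 1) * ((ea + 1) * ((eb + 1) * d t))) := by ring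
    have eR : (3 * ep) * ((3 * ea) * ((3 * eb) * d t)) =
        27 * (ep * (ea * (eb * d t))) := by ring
    have eG : ep * (ea * (eb * (2 * (2 * d t)))) = 4 * (ep * (ea * (eb * d t))) := by
      ring
    rw [eL, eR] at big
    rw [eG]
    linarith
  have := hn.2 m hmpos hmlt
  linarith
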